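/- Let s be the permutation of a finite ordered list that moves the entries at (sorted) positions η(d+1) < η(d+2) < … < η(n+1) (out of positions 0,…,n) to the end, preserving the relative order of the remaining entries and of the moved entries. If instead one additional position κ with η(d+B) < κ < η(d+B+1) is removed from the list before performing this operation, the sign of the resulting permutation s_κ satisfies det(s_κ) = (−1)^B det(s_0), where s_0 corresponds to removing a position κ₀ < η(d+1). -/
import Mathlib


/-- The sign of the permutation that reorders the sorted list of `S` so that the
elements of `T` are moved to the end (preserving relative order), expressed via
the inversion count. -/
def moveSign (S T : Finset ℕ) : ℤ :=
  (-1) ^ (((T ×ˢ (S \ T)).filter (fun p => p.1 < p.2)).card)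

lemma aux_split15 (T C : Finset ℕ) (κ : ℕ) (hκ : κ ∈ C) :
    ((T ×ˢ C).filter (fun p => p.1 < p.2)).card
      = ((T ×ˢ (C.erase κ)).filter (fun p => p.1 < p.2)).card
        + (T.filter (· < κ)).card := by
  classical
  have h1 : (T ×ˢ C).filter (fun p => p.1 < p.2)
      = ((T ×ˢ (C.erase κ)).filter (fun p => p.1 < p.2))
        ∪ ((T.filter (· < κ)).image (fun t => (t, κ))) := by
    ext ⟨a, b⟩
    simp only [Finset.mem_filter, Finset.mem_union, Finset.mem_product,
      Finset.mem_erase, Finset.mem_image]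
    constructor
    · rintro ⟨⟨ha, hb⟩, hab⟩
      by_cases hbκ : b = κ
      · right; exact ⟨a, ⟨ha, hbκ ▸ hab⟩, by simp [hbκ]⟩
      · left; exact ⟨⟨ha, hbκ, hb⟩, hab⟩
    · rintro (⟨⟨ha, _, hb⟩, hab⟩ | ⟨t, ⟨ht, htκ⟩, heq⟩)
      · exact ⟨⟨ha, hb⟩, hab⟩
      · cases heq; exact ⟨⟨ht, hκ⟩, htκ⟩
  rw [h1, Finset.card_union_of_disjoint, Finset.card_image_of_injective]
  · exact fun a b h => (Prod.ext_iff.mp h).1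
  · rw [Finset.disjoint_left]
    rintro ⟨a, b⟩ h1 h2
    simp only [Finset.mem_filter, Finset.mem_product, Finset.mem_erase] at h1
    simp only [Finset.mem_image, Finset.mem_filter] at h2
    obtain ⟨t, _, heq⟩ := h2
    cases heq
    exact h1.1.2.1 rfl

theorem stmt15 (n d B : ℕ) (hdn : d ≤ n) (hB : B ≤ n - d + 1)
    (η : ℕ → ℕ)
    (hmono : StrictMonoOn η (Set.Icc (d + 1) (n + 1)))
    (hrange : ∀ j ∈ Finset.Icc (d + 1) (n + 1), η j ≤ n)
    (T : Finset ℕ) (hT : T = (Finset.Icc (d + 1) (n + 1)).image η)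
    (κ κ₀ : ℕ) (hκn : κ ≤ n) (hκ₀n : κ₀ ≤ n)
    (hκT : κ ∉ T) (hκ₀T : κ₀ ∉ T)
    (hlow : ∀ j ∈ Finset.Icc (d + 1) (d + B), η j < κ)
    (hhigh : ∀ j ∈ Finset.Icc (d + B + 1) (n + 1), κ < η j)
    (h0 : ∀ j ∈ Finset.Icc (d + 1) (n + 1), κ₀ < η j) :
    moveSign ((Finset.range (n + 1)).erase κ) T
      = (-1) ^ B * moveSign ((Finset.range (n + 1)).erase κ₀) T := by
  classical
  set R := Finset.range (n + 1) with hR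
  have hsdiff : ∀ x : ℕ, x ∉ T → (R.erase x) \ T = (R \ T).erase x := by
    intro x hx
    ext y
    simp only [Finset.mem_sdiff, Finset.mem_erase]
    tauto
  have hκC : κ ∈ R \ T := by
    simp [Finset.mem_sdiff, hR, Finset.mem_range, Nat.lt_succ_iff, hκn, hκT]
  have hκ₀C : κ₀ ∈ R \ T := by
    simp [Finset.mem_sdiff, hR, Finset.mem_range, Nat.lt_succ_iff, hκ₀n, hκ₀T]
  -- count of T-elements below κ is B
  have hdB : d + B ≤ n + 1 := by omega
  have hfilκ : T.filter (· < κ) = (Finset.Icc (d + 1) (d + B)).image η := by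
    ext x
    simp only [Finset.mem_filter, hT, Finset.mem_image, Finset.mem_Icc]
    constructor
    · rintro ⟨⟨j, ⟨hj1, hj2⟩, rfl⟩, hx⟩
      refine ⟨j, ⟨hj1, ?_⟩, rfl⟩
      by_contra h
      exact absurd (hhigh j (Finset.mem_Icc.mpr ⟨by omega, hj2⟩)) (by omega)
    · rintro ⟨j, ⟨hj1, hj2⟩, rfl⟩
      exact ⟨⟨j, ⟨hj1, by omega⟩, rfl⟩, hlow j (Finset.mem_Icc.mpr ⟨hj1, hj2⟩)⟩
  have hcardκ : (T.filter (· < κ)).card = B := by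
    rw [hfilκ, Finset.card_image_of_injOn, Nat.card_Icc]
    · omega
    · intro a ha b hb hab
      apply hmono.injOn
      · simp only [Finset.coe_Icc, Set.mem_Icc] at ha ⊢
        exact ⟨ha.1, le_trans ha.2 hdB⟩
      · simp only [Finset.coe_Icc, Set.mem_Icc] at hb ⊢
        exact ⟨hb.1, le_trans hb.2 hdB⟩
      · exact hab
  have hcardκ₀ : (T.filter (· < κ₀)).card = 0 := by
    rw [Finset.card_eq_zero, Finset.filter_eq_empty_iff]
    intro x hx
    rw [hT] at hx
    obtain ⟨j, hj, rfl⟩ := Finset.mem_image.mp hx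
    exact not_lt.mpr (le_of_lt (h0 j hj))
  have e1 := aux_split15 T (R \ T) κ hκC
  have e2 := aux_split15 T (R \ T) κ₀ hκ₀C
  rw [hcardκ] at e1
  rw [hcardκ₀] at e2
  unfold moveSign
  rw [hsdiff κ hκT, hsdiff κ₀ hκ₀T]
  have key : ((T ×ˢ ((R \ T).erase κ₀)).filter (fun p => p.1 < p.2)).card
      = ((T ×ˢ ((R \ T).erase κ)).filter (fun p => p.1 < p.2)).card + B := by
    omega
  rw [key, pow_add, ← mul_assoc]
  have : ((-1 : ℤ)) ^ B * (-1) ^ B = 1 := by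
    rw [← pow_add, ← two_mul, pow_mul]; norm_num
  rw [mul_comm ((-1:ℤ)^B), mul_assoc, this, mul_one]
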